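/- arXiv:2308.15728 — 4 statements merged into one kernel-verified Lean document; each statement's English description precedes it below -/
import Mathlib

section
/- Let α be a connected multigraph (without self-loops) on a vertex set, and let β be a connected sub-multigraph of α. Then |V(α − β)| + |V(β)| − C(α − β) ≥ |V(α)|, where V(·) denotes the set of vertices spanned by the edges of a multigraph, α − β is the multigraph obtained by removing the edges of β from α, and C(α − β) is the number of connected components of α − β. -/
/-- The simple graph underlying a multigraph `α` on `Fin n`, where `α e` is the
multiplicity of the unordered pair `e`. -/
def edgeGraph {n : ℕ} (α : Sym2 (Fin n) → ℕ) : SimpleGraph (Fin n) :=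
  SimpleGraph.fromRel (fun i j => α s(i, j) ≠ 0)

/-- The set of vertices spanned by the edges of the multigraph `α`. -/
def vertexSet {n : ℕ} (α : Sym2 (Fin n) → ℕ) : Set (Fin n) :=
  {v | ∃ e : Sym2 (Fin n), α e ≠ 0 ∧ v ∈ e}

/-- A multigraph is connected if it spans at least one vertex and any two spanned
vertices are joined by a path of its edges. -/
def MGConnected {n : ℕ} (α : Sym2 (Fin n) → ℕ) : Prop :=
  (vertexSet α).Nonempty ∧
    ∀ u ∈ vertexSet α, ∀ v ∈ vertexSet α, (edgeGraph α).Reachable u v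

/-- The number of connected components of the multigraph `α` (components of the
underlying simple graph that meet the spanned vertex set). -/
noncomputable def numComponents {n : ℕ} (α : Sym2 (Fin n) → ℕ) : ℕ :=
  {c : (edgeGraph α).ConnectedComponent |
      ∃ v ∈ vertexSet α, (edgeGraph α).connectedComponentMk v = c}.ncard

section Aux

variable {n : ℕ}

lemma adj_ne_zero {α : Sym2 (Fin n) → ℕ} {v w : Fin n}
    (h : (edgeGraph α).Adj v w) : α s(v, w) ≠ 0 := by
  rw [edgeGraph, SimpleGraph.fromRel_adj] at h
  obtain ⟨-, h | h⟩ := h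
  · exact h
  · rwa [Sym2.eq_swap]

lemma mem_vertexSet_of_adj {α : Sym2 (Fin n) → ℕ} {v w : Fin n}
    (h : (edgeGraph α).Adj v w) : v ∈ vertexSet α :=
  ⟨s(v, w), adj_ne_zero h, Sym2.mem_mk_left v w⟩

lemma mem_vertexSet_of_reachable {α : Sym2 (Fin n) → ℕ} {v w : Fin n}
    (hv : v ∈ vertexSet α) (h : (edgeGraph α).Reachable v w) : w ∈ vertexSet α := by
  obtain ⟨p⟩ := h
  induction p with
  | nil => exact hv
  | cons h p ih => exact ih (mem_vertexSet_of_adj h.symm)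

lemma reach_beta (α β : Sym2 (Fin n) → ℕ) :
    ∀ {v u : Fin n}, (edgeGraph α).Walk v u → u ∈ vertexSet β →
      ∃ w ∈ vertexSet β, (edgeGraph (α - β)).Reachable v w := by
  intro v u p
  induction p with
  | nil => exact fun hu => ⟨_, hu, .rfl⟩
  | @cons v x u h p ih =>
    intro hu
    by_cases hv : v ∈ vertexSet β
    · exact ⟨v, hv, .rfl⟩
    obtain ⟨w, hw, hr⟩ := ih hu
    have hβ0 : β s(v, x) = 0 := by
      by_contra hb
      exact hv ⟨s(v, x), hb, Sym2.mem_mk_left v x⟩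
    have hγ : (α - β) s(v, x) ≠ 0 := by
      have := adj_ne_zero h
      simp [Pi.sub_apply, hβ0]
      omega
    have hadj : (edgeGraph (α - β)).Adj v x := by
      rw [edgeGraph, SimpleGraph.fromRel_adj]
      exact ⟨h.ne, Or.inl hγ⟩
    exact ⟨w, hw, hadj.reachable.trans hr⟩

lemma union_eq (α β : Sym2 (Fin n) → ℕ) (hβα : ∀ e, β e ≤ α e) :
    vertexSet (α - β) ∪ vertexSet β = vertexSet α := by
  ext v
  constructor
  · rintro (⟨e, he, hv⟩ | ⟨e, he, hv⟩)
    · refine ⟨e, ?_, hv⟩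
      simp only [Pi.sub_apply] at he
      omega
    · exact ⟨e, fun h0 => he (Nat.le_antisymm (h0 ▸ hβα e) (Nat.zero_le _)), hv⟩
  · rintro ⟨e, he, hv⟩
    by_cases hγ : (α - β) e = 0
    · right
      refine ⟨e, ?_, hv⟩
      simp only [Pi.sub_apply] at hγ
      have := hβα e
      omega
    · exact Or.inl ⟨e, hγ, hv⟩

end Aux

/-- For a connected multigraph `α` and a connected sub-multigraph
`β` of `α`, `|V(α − β)| + |V(β)| − C(α − β) ≥ |V(α)|`, stated additively. -/
theorem vertex_count_of_sub_multigraph {n : ℕ} (α β : Sym2 (Fin n) → ℕ)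
    (hloopα : ∀ e : Sym2 (Fin n), e.IsDiag → α e = 0)
    (hβα : ∀ e, β e ≤ α e)
    (hα : MGConnected α) (hβ : MGConnected β) :
    (vertexSet (α - β)).ncard + (vertexSet β).ncard ≥
      numComponents (α - β) + (vertexSet α).ncard := by

  classical
  obtain ⟨u₀, hu₀⟩ := hβ.1
  set γ := α - β with hγdef
  set s : Set (edgeGraph γ).ConnectedComponent :=
    {c | ∃ v ∈ vertexSet γ, (edgeGraph γ).connectedComponentMk v = c} with hs
  have key : ∀ c ∈ s, ∃ w, w ∈ vertexSet γ ∩ vertexSet β ∧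
      (edgeGraph γ).connectedComponentMk w = c := by
    rintro c ⟨v, hv, hvc⟩
    have hvα : v ∈ vertexSet α := by
      rw [← union_eq α β hβα]; exact Or.inl hv
    have huα : u₀ ∈ vertexSet α := by
      rw [← union_eq α β hβα]; exact Or.inr hu₀
    obtain ⟨p⟩ := hα.2 v hvα u₀ huα
    obtain ⟨w, hwβ, hr⟩ := reach_beta α β p hu₀
    exact ⟨w, ⟨mem_vertexSet_of_reachable hv hr, hwβ⟩,
      ((SimpleGraph.ConnectedComponent.sound hr).symm).trans hvc⟩
  have hcard : s.ncard ≤ (vertexSet γ ∩ vertexSet β).ncard := by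
    have : ∀ c : (edgeGraph γ).ConnectedComponent, c ∈ s →
        ∃ w, w ∈ vertexSet γ ∩ vertexSet β ∧
          (edgeGraph γ).connectedComponentMk w = c := key
    choose f hf1 hf2 using this
    classical
    set F : (edgeGraph γ).ConnectedComponent → Fin n :=
      fun c => if h : c ∈ s then f c h else u₀ with hF
    apply Set.ncard_le_ncard_of_injOn F
    · intro c hc
      simp only [hF, dif_pos hc]
      exact hf1 c hc
    · intro c hc c' hc' hcc
      simp only [hF, dif_pos hc, dif_pos hc'] at hcc
      rw [← hf2 c hc, ← hf2 c' hc', hcc]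
  have hunion : vertexSet γ ∪ vertexSet β = vertexSet α := union_eq α β hβα
  have h2 : (vertexSet γ ∩ vertexSet β).ncard + (vertexSet γ ∪ vertexSet β).ncard
      = (vertexSet γ).ncard + (vertexSet β).ncard :=
    Set.ncard_inter_add_ncard_union _ _ (Set.toFinite _) (Set.toFinite _)
  rw [hunion] at h2
  have : numComponents γ = s.ncard := rfl
  omega
end

section
/- For any d ≥ 1 and 0 ≤ h ≤ d − 1, the number of connected multigraphs α on vertex set [n] with total number of edges |α| = d, number of spanned vertices |V(α)| = d + 1 − h, and such that both vertex 1 and vertex 2 lie in V(α), is at most n^{d−h−1} · d^{d+h}. -/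
/-! Write `k = d - h - 1`, so `|V(α)| = k + 2`. List `V(α)` as `σ : Fin (k + 2) → Fin n` with
`σ 0 = 1` and `σ 1 = 2`, leaving `n ^ k` choices. Every other vertex has a neighbour strictly
closer to `σ 0`; the `k + 1` edges to these parents are distinct, and each is coded by one of
the `k + 1` other vertices. The remaining `h` edges are recorded as ordered pairs of indices.
This codes `α` by at most `n ^ k * (k + 1) ^ (k + 1) * (k + 2) ^ (2 * h)` data, and
`k + 1 ≤ d`, while `k + 2 ≤ d` as soon as `h ≠ 0`. -/

open Finset

section FiberCount

variable {ι κ Y : Type*} [Fintype ι] [Fintype κ] [DecidableEq Y]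

def fiberCount (f : ι → Y) (y : Y) : ℕ := #{i | f i = y}

theorem sum_fiberCount [Fintype Y] (f : ι → Y) : ∑ y, fiberCount f y = Fintype.card ι :=
  (card_eq_sum_card_fiberwise fun _ _ => mem_univ _).symm

theorem fiberCount_apply_self_ne_zero (f : ι → Y) (i : ι) : fiberCount f (f i) ≠ 0 :=
  card_ne_zero_of_mem (mem_filter.mpr ⟨mem_univ i, rfl⟩)

theorem fiberCount_le_one (f : ι → Y) (hf : Function.Injective f) (y : Y) : fiberCount f y ≤ 1 :=
  card_le_one.mpr fun _ hi _ hj => hf ((mem_filter.mp hi).2.trans (mem_filter.mp hj).2.symm)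

theorem fiberCount_sumElim (f : ι → Y) (g : κ → Y) :
    fiberCount (Sum.elim f g) = fiberCount f + fiberCount g := by
  ext y
  simp only [fiberCount, card_filter, Fintype.sum_sum_type, Sum.elim_inl, Sum.elim_inr,
    Pi.add_apply]
  rfl

theorem fiberCount_cons {m : ℕ} (y : Y) (f : Fin m → Y) :
    fiberCount (Fin.cons y f : Fin (m + 1) → Y) = Pi.single y 1 + fiberCount f := by
  ext z
  simp only [fiberCount, card_filter, Fin.sum_univ_succ, Fin.cons_zero, Fin.cons_succ,
    Pi.add_apply, Pi.single_apply, eq_comm]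

theorem exists_fiberCount_eq [Fintype Y] {m : ℕ} (β : Y → ℕ) (hβ : ∑ y, β y = m) :
    ∃ g : Fin m → Y, fiberCount g = β := by
  induction m generalizing β with
  | zero =>
    refine ⟨Fin.elim0, funext fun y => ?_⟩
    simp only [fiberCount, univ_eq_empty, filter_empty, card_empty]
    exact ((sum_eq_zero_iff.mp hβ) y (mem_univ y)).symm
  | succ m ih =>
    obtain ⟨y, -, hy⟩ := exists_ne_zero_of_sum_ne_zero (hβ.trans_ne m.succ_ne_zero)
    have hsplit : Pi.single y 1 + (β - Pi.single y 1) = β := by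
      refine add_tsub_cancel_of_le fun z => ?_
      rcases eq_or_ne z y with rfl | hz
      · simpa [Nat.one_le_iff_ne_zero] using hy
      · simp [hz]
    obtain ⟨g, hg⟩ := ih (β - Pi.single y 1) (by
      have := congrArg (fun γ : Y → ℕ => ∑ z, γ z) hsplit
      simp only [Pi.add_apply, sum_add_distrib, sum_pi_single', mem_univ, if_true] at this
      omega)
    exact ⟨Fin.cons y g, by rw [fiberCount_cons, hg, hsplit]⟩

theorem fiberCount_le_of_injective [Fintype Y] {f : ι → Y} (hf : Function.Injective f)
    {α : Y → ℕ} (hα : ∀ i, α (f i) ≠ 0) : fiberCount f ≤ α := by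
  intro y
  by_cases hy : ∃ i, f i = y
  · obtain ⟨i, rfl⟩ := hy
    exact (fiberCount_le_one f hf _).trans (Nat.one_le_iff_ne_zero.mpr (hα i))
  · simp [fiberCount, not_exists.mp hy]

theorem exists_sumElim_fiberCount_eq [Fintype Y] {m : ℕ} {f : ι → Y}
    (hf : Function.Injective f) {α : Y → ℕ} (hα : ∀ i, α (f i) ≠ 0)
    (hsum : ∑ y, α y = Fintype.card ι + m) :
    ∃ g : Fin m → Y, fiberCount (Sum.elim f g) = α := by
  have hsplit : fiberCount f + (α - fiberCount f) = α :=
    add_tsub_cancel_of_le (fiberCount_le_of_injective hf hα)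
  obtain ⟨g, hg⟩ := exists_fiberCount_eq (m := m) (α - fiberCount f) (by
    have := congrArg (fun γ : Y → ℕ => ∑ y, γ y) hsplit
    simp only [Pi.add_apply, sum_add_distrib, sum_fiberCount] at this
    omega)
  exact ⟨g, by rw [fiberCount_sumElim, hg, hsplit]⟩

end FiberCount

theorem SimpleGraph.Reachable.exists_adj_dist_lt {V : Type*} {G : SimpleGraph V} {x r : V}
    (h : G.Reachable x r) (hne : x ≠ r) : ∃ y, G.Adj x y ∧ G.dist y r < G.dist x r := by
  obtain ⟨p, hp⟩ := SimpleGraph.exists_walk_of_dist_ne_zero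
    (SimpleGraph.dist_ne_zero_iff_ne_and_reachable.mpr ⟨hne, h⟩)
  cases p with
  | nil => exact absurd rfl hne
  | cons hadj q =>
    refine ⟨_, hadj, ?_⟩
    have := SimpleGraph.dist_le q
    rw [SimpleGraph.Walk.length_cons] at hp
    omega

theorem Sym2.injective_mk_of_lt {ι X : Type*} {u v : ι → X} (hu : Function.Injective u)
    (φ : X → ℕ) (h : ∀ i, φ (v i) < φ (u i)) : Function.Injective fun i => s(u i, v i) := by
  intro i j hij
  rcases Sym2.eq_iff.mp hij with ⟨hu', -⟩ | ⟨huv, hvu⟩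
  · exact hu hu'
  · have hi := h i
    have hj := h j
    rw [huv, hvu] at hi
    omega

theorem exists_injective_cons_cons_range_eq {X : Type*} {V : Set X} {k : ℕ}
    (hV : V.ncard = k + 2) {v₁ v₂ : X} (h₁ : v₁ ∈ V) (h₂ : v₂ ∈ V) (h₁₂ : v₁ ≠ v₂) :
    ∃ w : Fin k → X, Function.Injective (Fin.cons v₁ (Fin.cons v₂ w) : Fin (k + 2) → X) ∧
      Set.range (Fin.cons v₁ (Fin.cons v₂ w) : Fin (k + 2) → X) = V := by
  have hfin : V.Finite := Set.finite_of_ncard_ne_zero (by omega)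
  set V' := V \ {v₁, v₂}
  have hpair : ({v₁, v₂} : Set X) ⊆ V := Set.insert_subset h₁ (Set.singleton_subset_iff.mpr h₂)
  have hV' : Nat.card V' = k := by
    rw [Nat.card_coe_set_eq, Set.ncard_sdiff hpair, Set.ncard_pair h₁₂, hV]
    omega
  have : Finite V' := (hfin.subset Set.sdiff_subset).to_subtype
  let e := Finite.equivFinOfCardEq hV'
  refine ⟨Subtype.val ∘ e.symm, ?_, ?_⟩
  · simp [Fin.cons_injective_iff, h₁₂, V', e.symm.injective]
  · rw [Fin.range_cons, Fin.range_cons, Set.range_comp, e.symm.range_eq_univ, Set.image_univ,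
      Subtype.range_coe, ← Set.singleton_union (a := v₂), ← Set.insert_union,
      Set.union_sdiff_cancel hpair]

section Multigraph

variable {n k h : ℕ}

theorem edgeGraph_adj (α : Sym2 (Fin n) → ℕ) (x y : Fin n) :
    (edgeGraph α).Adj x y ↔ x ≠ y ∧ α s(x, y) ≠ 0 := by
  rw [edgeGraph, SimpleGraph.fromRel_adj, Sym2.eq_swap, or_self]

/-- `p i` codes the parent of `σ i.succ`, one of the `k + 1` vertices `σ (i.succ.succAbove j)`
other than itself. -/
def treeEdge (σ : Fin (k + 2) → Fin n) (p : Fin (k + 1) → Fin (k + 1)) (i : Fin (k + 1)) :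
    Sym2 (Fin n) :=
  s(σ i.succ, σ (i.succ.succAbove (p i)))

def decode (σ : Fin (k + 2) → Fin n) (p : Fin (k + 1) → Fin (k + 1))
    (t : Fin h → Fin (k + 2) × Fin (k + 2)) : Sym2 (Fin n) → ℕ :=
  fiberCount (Sum.elim (treeEdge σ p) fun j => s(σ (t j).1, σ (t j).2))

variable {α : Sym2 (Fin n) → ℕ} {σ : Fin (k + 2) → Fin n}

theorem exists_mk_eq_of_ne_zero (hσ : Set.range σ = vertexSet α) {e : Sym2 (Fin n)}
    (he : α e ≠ 0) : ∃ q : Fin (k + 2) × Fin (k + 2), s(σ q.1, σ q.2) = e := by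
  induction e using Sym2.ind with
  | h x y =>
    obtain ⟨a, rfl⟩ : x ∈ Set.range σ := hσ ▸ ⟨_, he, Sym2.mem_mk_left x y⟩
    obtain ⟨b, rfl⟩ : y ∈ Set.range σ := hσ ▸ ⟨_, he, Sym2.mem_mk_right _ y⟩
    exact ⟨(a, b), rfl⟩

theorem exists_injective_treeEdge (hconn : MGConnected α) (hinj : Function.Injective σ)
    (hσ : Set.range σ = vertexSet α) :
    ∃ p, Function.Injective (treeEdge σ p) ∧ ∀ i, α (treeEdge σ p i) ≠ 0 := by
  have hmem : ∀ a, σ a ∈ vertexSet α := fun a => hσ ▸ Set.mem_range_self a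
  have hparent : ∀ i : Fin (k + 1), ∃ j,
      (edgeGraph α).Adj (σ i.succ) (σ (i.succ.succAbove j)) ∧
      (edgeGraph α).dist (σ (i.succ.succAbove j)) (σ 0) < (edgeGraph α).dist (σ i.succ) (σ 0) := by
    intro i
    obtain ⟨y, hadj, hlt⟩ := (hconn.2 _ (hmem i.succ) _ (hmem 0)).exists_adj_dist_lt
      (hinj.ne (Fin.succ_ne_zero i))
    obtain ⟨b, rfl⟩ : y ∈ Set.range σ :=
      hσ ▸ ⟨_, ((edgeGraph_adj α _ _).mp hadj).2, Sym2.mem_mk_right _ y⟩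
    obtain ⟨j, rfl⟩ := Fin.exists_succAbove_eq (fun heq => hadj.ne (congrArg σ heq).symm)
    exact ⟨j, hadj, hlt⟩
  choose p hadj hlt using hparent
  exact ⟨p, Sym2.injective_mk_of_lt (hinj.comp (Fin.succ_injective _))
    (fun x => (edgeGraph α).dist x (σ 0)) hlt,
    fun i => ((edgeGraph_adj α _ _).mp (hadj i)).2⟩

theorem exists_decode_eq (hconn : MGConnected α) (hsum : ∑ e, α e = k + 1 + h)
    (hinj : Function.Injective σ) (hσ : Set.range σ = vertexSet α) :
    ∃ p t, decode (h := h) σ p t = α := by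
  obtain ⟨p, hpinj, hpα⟩ := exists_injective_treeEdge hconn hinj hσ
  obtain ⟨g, hg⟩ := exists_sumElim_fiberCount_eq hpinj hpα (by rw [hsum, Fintype.card_fin])
  have hgα : ∀ j, α (g j) ≠ 0 := fun j => hg ▸ fiberCount_apply_self_ne_zero _ (Sum.inr j)
  choose t ht using fun j => exists_mk_eq_of_ne_zero hσ (hgα j)
  exact ⟨p, t, by rw [decode, ← hg]; congr; funext j; exact ht j⟩

end Multigraph

/-- The number of connected multigraphs on `[n]` with `d` edges,
`d + 1 − h` spanned vertices, containing both vertex 1 and vertex 2, is at most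
`n^(d−h−1) · d^(d+h)`. -/
theorem count_connected_multigraphs (n d h : ℕ) (hn : 2 ≤ n) (hd : 1 ≤ d)
    (hh : h ≤ d - 1) :
    {α : Sym2 (Fin n) → ℕ |
        (∀ e : Sym2 (Fin n), e.IsDiag → α e = 0) ∧
        MGConnected α ∧
        (∑ e : Sym2 (Fin n), α e) = d ∧
        (vertexSet α).ncard = d + 1 - h ∧
        (⟨0, by omega⟩ : Fin n) ∈ vertexSet α ∧
        (⟨1, by omega⟩ : Fin n) ∈ vertexSet α}.ncard ≤
      n ^ (d - h - 1) * d ^ (d + h) := by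
  set k := d - h - 1
  have hdk : d = k + 1 + h := by omega
  let code (c : (Fin k → Fin n) × (Fin (k + 1) → Fin (k + 1)) ×
      (Fin h → Fin (k + 2) × Fin (k + 2))) : Sym2 (Fin n) → ℕ :=
    decode (Fin.cons ⟨0, by omega⟩ (Fin.cons ⟨1, by omega⟩ c.1)) c.2.1 c.2.2
  calc _ ≤ (Set.range code).ncard := by
        refine Set.ncard_le_ncard ?_ (Set.finite_range _)
        rintro α ⟨-, hconn, hsum, hV, h₀, h₁⟩
        obtain ⟨w, hinj, hσ⟩ := exists_injective_cons_cons_range_eq (k := k) (by omega) h₀ h₁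
          (by simp [Fin.ext_iff])
        obtain ⟨p, t, hpt⟩ := exists_decode_eq (h := h) hconn (by omega) hinj hσ
        exact ⟨(w, p, t), hpt⟩
    _ ≤ n ^ k * (k + 1) ^ (k + 1) * ((k + 2) * (k + 2)) ^ h :=
        (Finite.card_range_le code).trans (by simp [mul_assoc])
    _ ≤ n ^ k * d ^ (k + 1) * (d * d) ^ h := by
        have htree : (k + 1) ^ (k + 1) ≤ d ^ (k + 1) := Nat.pow_le_pow_left (by omega) _
        have hextra : ((k + 2) * (k + 2)) ^ h ≤ (d * d) ^ h := by
          rcases Nat.eq_zero_or_pos h with h0 | hpos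
          · simp [h0]
          · exact Nat.pow_le_pow_left (Nat.mul_self_le_mul_self (by omega)) _
        gcongr
    _ = n ^ (d - h - 1) * d ^ (d + h) := by
        rw [show d + h = (k + 1) + h + h by omega, pow_add, pow_add, mul_pow]
        ring
end

section
/- Let X be drawn from the uniform SBM prior with fixed first vertex and parameter λ > 0 on k communities and n vertices, and let x = X_{12}. For any connected multigraph α with |α| ≥ 1 and both 1 ∈ V(α) and 2 ∈ V(α), the recursively defined quantity κ_α(x, X) satisfies |κ_α(x, X)| ≤ λ^{|α|+1} (1/k)^{|V(α)|−1} (|α| + 1)^{|α|}. -/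
/-- Off-diagonal unordered pairs of `Fin n`: the possible edges of a loopless
multigraph, `N = n(n−1)/2` of them. -/
abbrev OffDiag (n : ℕ) := {e : Sym2 (Fin n) // ¬ e.IsDiag}

/-- The set of vertices spanned by the edges of the multigraph `α`. -/
def vertexSetE {n : ℕ} (α : OffDiag n → ℕ) : Set (Fin n) :=
  {v | ∃ e : OffDiag n, α e ≠ 0 ∧ v ∈ e.1}

/-- The simple graph underlying the multigraph `α`. -/
def edgeGraphE {n : ℕ} (α : OffDiag n → ℕ) : SimpleGraph (Fin n) :=
  SimpleGraph.fromRel (fun i j =>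
    ∃ h : ¬ (s(i, j) : Sym2 (Fin n)).IsDiag, α ⟨s(i, j), h⟩ ≠ 0)

/-- Connectivity of the multigraph `α`. -/
def MGConnectedE {n : ℕ} (α : OffDiag n → ℕ) : Prop :=
  (vertexSetE α).Nonempty ∧
    ∀ u ∈ vertexSetE α, ∀ v ∈ vertexSetE α, (edgeGraphE α).Reachable u v

/-- The quantities `κ_α(x, X)` defined by the Schramm–Wein recursion
`κ_α = E[x X^α] − Σ_{β ⪇ α} κ_β · C(α,β) · E[X^{α−β}]` (with `κ₀ = E[x]`),
given the moment functionals `Mx α = E[x X^α]` and `Mm α = E[X^α]`. -/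
noncomputable def kappaRec {E : Type*} [Fintype E] [DecidableEq E]
    (Mx Mm : (E → ℕ) → ℝ) (α : E → ℕ) : ℝ :=
  Mx α - ∑ β ∈ ((Finset.Icc 0 α).erase α).attach,
    kappaRec Mx Mm β.1 * ((∏ e, (α e).choose (β.1 e) : ℕ) : ℝ) * Mm (α - β.1)
termination_by ∑ e, α e
decreasing_by
  have hβ := β.2
  rw [Finset.mem_erase, Finset.mem_Icc] at hβ
  obtain ⟨hne, _, hle⟩ := hβ
  obtain ⟨e, he⟩ := Function.ne_iff.mp hne
  exact Finset.sum_lt_sum (fun i _ => hle i)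
    ⟨e, Finset.mem_univ e, lt_of_le_of_ne (hle e) he⟩

/-- The entry `X_{ij} = λ·1(zᵢ = z_j)`, as a function on unordered pairs. -/
noncomputable def Xent {n k : ℕ} (lam : ℝ) (z : Fin n → Fin k) :
    Sym2 (Fin n) → ℝ :=
  Sym2.lift ⟨fun i j => if z i = z j then lam else 0,
    fun i j => by by_cases h : z i = z j <;> simp [h, eq_comm]⟩

/-- `X^α = Π_e X_e^{α_e}`. -/
noncomputable def Xpow {n k : ℕ} (lam : ℝ) (z : Fin n → Fin k)
    (α : OffDiag n → ℕ) : ℝ :=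
  ∏ e : OffDiag n, Xent lam z e.1 ^ α e

/-- Expectation under the uniform SBM prior with fixed first vertex:
`z₁ = 1` and `z₂, …, z_n` i.i.d. uniform on `[k]`. -/
noncomputable def sbmE (n k : ℕ) (hn : 0 < n) (hk : 0 < k)
    (f : (Fin n → Fin k) → ℝ) : ℝ :=
  (∑ z ∈ Finset.univ.filter (fun z : Fin n → Fin k => z ⟨0, hn⟩ = ⟨0, hk⟩), f z) /
    ((Finset.univ.filter (fun z : Fin n → Fin k => z ⟨0, hn⟩ = ⟨0, hk⟩)).card : ℝ)

/-- `κ_α(x, X)` for `x = X_{12}` under the uniform SBM prior with fixed first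
vertex and parameter `λ`. -/
noncomputable def kappaSBM (n k : ℕ) (hn : 2 ≤ n) (hk : 0 < k) (lam : ℝ) :
    (OffDiag n → ℕ) → ℝ :=
  kappaRec
    (fun α => sbmE n k (by omega) hk
      (fun z => Xent lam z s((⟨0, by omega⟩ : Fin n), (⟨1, hn⟩ : Fin n)) *
        Xpow lam z α))
    (fun α => sbmE n k (by omega) hk (fun z => Xpow lam z α))

/-!
Let `r(γ) = n − #components` be the rank of the graph spanned by a multigraph `γ` on `[n]`
(isolated vertices count as components). `X^γ` equals `λ^{|γ|}` when the labels are constant on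
components and vanishes otherwise, so `E[X^γ] = λ^{|γ|} k^{−r(γ)}`, and `E[x X^γ] = E[X^{γ+e}]`
for the edge `e = {1,2}`. The graph of `α + e` is the union of those of `β + e` and `α − β`, and
the rank is subadditive because `ker L(G ⊔ H) = ker L(G) ∩ ker L(H)` for graph Laplacians.
Hence `A(γ) = λ^{|γ|+1} k^{−r(γ+e)}` satisfies `A(β) E[X^{α−β}] ≤ A(α)`, and strong induction
on `|α|` in the recursion gives `|κ_α| ≤ A(α) (|α|+1)^{|α|}`, by
`∑_{β ≤ α} C(α,β) |α|^{|β|} = (|α|+1)^{|α|}` and `(|β|+1)^{|β|} ≤ |α|^{|β|}` for `β ⪇ α`.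
For connected `α` all of `V(α)` lies in one component, so `r(α + e) ≥ r(α) ≥ |V(α)| − 1`.
-/

open Finset

namespace SimpleGraph

variable {V : Type*}

noncomputable def rank [Fintype V] (G : SimpleGraph V) : ℕ :=
  Fintype.card V - Nat.card G.ConnectedComponent

section Rank

variable [Fintype V] {G H : SimpleGraph V}

theorem card_connectedComponent_le_card (G : SimpleGraph V) :
    Nat.card G.ConnectedComponent ≤ Fintype.card V :=
  Nat.card_eq_fintype_card (α := V) ▸
    Nat.card_le_card_of_surjective _ fun c => c.exists_rep

theorem rank_mono (h : G ≤ H) : G.rank ≤ H.rank :=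
  Nat.sub_le_sub_left (ConnectedComponent.card_le_card_of_le h) _

theorem ker_toLin'_lapMatrix_sup [DecidableEq V] (G H : SimpleGraph V) [DecidableRel G.Adj]
    [DecidableRel H.Adj] :
    LinearMap.ker ((G ⊔ H).lapMatrix ℝ).toLin' =
      LinearMap.ker (G.lapMatrix ℝ).toLin' ⊓ LinearMap.ker (H.lapMatrix ℝ).toLin' := by
  ext x
  simp only [Submodule.mem_inf, LinearMap.mem_ker, Matrix.toLin'_apply,
    lapMatrix_mulVec_eq_zero_iff_forall_adj, sup_adj]
  exact ⟨fun h => ⟨fun i j hij => h i j (.inl hij), fun i j hij => h i j (.inr hij)⟩,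
    fun h i j => Or.rec (h.1 i j) (h.2 i j)⟩

theorem rank_sup_le (G H : SimpleGraph V) : (G ⊔ H).rank ≤ G.rank + H.rank := by
  classical
  have hcard (G : SimpleGraph V) [DecidableRel G.Adj] : Nat.card G.ConnectedComponent =
      Module.finrank ℝ (LinearMap.ker (G.lapMatrix ℝ).toLin') := by
    rw [Nat.card_eq_fintype_card, card_connectedComponent_eq_finrank_ker_toLin'_lapMatrix]
  have hdim := Submodule.finrank_sup_add_finrank_inf_eq
    (LinearMap.ker (G.lapMatrix ℝ).toLin') (LinearMap.ker (H.lapMatrix ℝ).toLin')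
  have hle := Submodule.finrank_le
    (LinearMap.ker (G.lapMatrix ℝ).toLin' ⊔ LinearMap.ker (H.lapMatrix ℝ).toLin')
  rw [← ker_toLin'_lapMatrix_sup, ← hcard, ← hcard, ← hcard] at hdim
  rw [Module.finrank_fintype_fun_eq_card] at hle
  have := (G ⊔ H).card_connectedComponent_le_card
  unfold rank
  omega

theorem ncard_sub_one_le_rank {S : Set V} (h : ∀ u ∈ S, ∀ v ∈ S, G.Reachable u v) :
    S.ncard - 1 ≤ G.rank := by
  rcases S.eq_empty_or_nonempty with rfl | ⟨s, hs⟩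
  · simp
  have hsurj : Function.Surjective fun o : Option ↥Sᶜ =>
      o.elim (G.connectedComponentMk s) (fun v => G.connectedComponentMk v) := by
    refine fun c => c.ind fun v => ?_
    by_cases hv : v ∈ S
    · exact ⟨none, ConnectedComponent.sound (h s hs v hv)⟩
    · exact ⟨some ⟨v, hv⟩, rfl⟩
  have hcomp := Nat.card_le_card_of_surjective _ hsurj
  have hS := Set.ncard_add_ncard_compl S
  rw [Finite.card_option, Nat.card_coe_set_eq] at hcomp
  rw [Nat.card_eq_fintype_card] at hS
  unfold rank
  omega

end Rank

theorem Reachable.eq_of_forall_adj {G : SimpleGraph V} {W : Type*} {z : V → W}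
    (hz : ∀ a b, G.Adj a b → z a = z b) {u v : V} (h : G.Reachable u v) : z u = z v := by
  obtain ⟨p⟩ := h
  induction p with
  | nil => rfl
  | cons hadj _ ih => exact (hz _ _ hadj).trans ih

def edgeConstEquiv (G : SimpleGraph V) (W : Type*) :
    {z : V → W // ∀ a b, G.Adj a b → z a = z b} ≃ (G.ConnectedComponent → W) where
  toFun z := ConnectedComponent.lift z.1 fun _ _ p _ => p.reachable.eq_of_forall_adj z.2
  invFun f := ⟨fun v => f (G.connectedComponentMk v),
    fun _ _ hab => congrArg f (ConnectedComponent.sound hab.reachable)⟩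
  left_inv _ := rfl
  right_inv _ := funext fun c => c.ind fun _ => rfl

theorem card_edgeConst_eval_eq [Fintype V] {W : Type*} [Fintype W] (G : SimpleGraph V)
    (i₀ : V) (w₀ : W) :
    Nat.card {z : V → W // z i₀ = w₀ ∧ ∀ a b, G.Adj a b → z a = z b} =
      Fintype.card W ^ (Nat.card G.ConnectedComponent - 1) := by
  classical
  have e : {z : V → W // z i₀ = w₀ ∧ ∀ a b, G.Adj a b → z a = z b} ≃
      {f : G.ConnectedComponent → W // f (G.connectedComponentMk i₀) = w₀} :=
    (Equiv.subtypeEquivRight fun _ => and_comm).trans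
      ((Equiv.subtypeSubtypeEquivSubtypeInter _ _).symm.trans
        ((G.edgeConstEquiv W).subtypeEquiv fun _ => Iff.rfl))
  have := Fintype.card_filter_piFinset_const_eq_of_mem univ (G.connectedComponentMk i₀)
    (mem_univ w₀)
  rw [Fintype.piFinset_univ, card_univ] at this
  rw [Nat.card_congr e, Nat.card_eq_fintype_card, Fintype.card_subtype, this,
    Nat.card_eq_fintype_card]

end SimpleGraph

section Multigraph

variable {n : ℕ}

theorem edgeGraphE_adj {γ : OffDiag n → ℕ} {i j : Fin n} :
    (edgeGraphE γ).Adj i j ↔ ∃ h : ¬ (s(i, j) : Sym2 (Fin n)).IsDiag, γ ⟨s(i, j), h⟩ ≠ 0 := by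
  rw [edgeGraphE, SimpleGraph.fromRel_adj]
  constructor
  · rintro ⟨-, h | ⟨hd, hγ⟩⟩
    · exact h
    · exact ⟨Sym2.eq_swap ▸ hd, by simpa only [Sym2.eq_swap] using hγ⟩
  · rintro ⟨hd, hγ⟩
    exact ⟨fun hij => hd (Sym2.mk_isDiag_iff.2 hij), .inl ⟨hd, hγ⟩⟩

theorem edgeGraphE_add (γ γ' : OffDiag n → ℕ) :
    edgeGraphE (γ + γ') = edgeGraphE γ ⊔ edgeGraphE γ' := by
  ext i j
  simp only [SimpleGraph.sup_adj, edgeGraphE_adj, Pi.add_apply, ne_eq, Nat.add_eq_zero_iff,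
    not_and_or, exists_or]

theorem rank_edgeGraphE_add_le {β γ : OffDiag n → ℕ} (h : β ≤ γ) (δ : OffDiag n → ℕ) :
    (edgeGraphE (γ + δ)).rank ≤ (edgeGraphE (β + δ)).rank + (edgeGraphE (γ - β)).rank := by
  rw [← add_tsub_cancel_of_le h, add_right_comm, add_tsub_cancel_left, edgeGraphE_add]
  exact SimpleGraph.rank_sup_le _ _

end Multigraph

theorem sum_Icc_prod_choose_mul_pow {E R : Type*} [Fintype E] [DecidableEq E] [CommSemiring R]
    (α : E → ℕ) (x : R) :
    ∑ β ∈ Icc 0 α, ((∏ e, (α e).choose (β e) : ℕ) : R) * x ^ (∑ e, β e) =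
      (x + 1) ^ (∑ e, α e) := by
  have hIcc : Icc 0 α = Fintype.piFinset fun e => range (α e + 1) := by
    ext β
    simp [Pi.le_def]
  simp_rw [hIcc, ← prod_pow_eq_pow_sum, Nat.cast_prod, ← prod_mul_distrib]
  rw [← prod_univ_sum (fun e => range (α e + 1)) fun e j => ((α e).choose j : R) * x ^ j]
  refine prod_congr rfl fun e _ => ?_
  rw [add_pow]
  refine sum_congr rfl fun j _ => ?_
  rw [one_pow, mul_one, mul_comm]

section KappaRec

variable {E : Type*} [Fintype E] [DecidableEq E]

theorem kappaRec_eq (Mx Mm : (E → ℕ) → ℝ) (α : E → ℕ) :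
    kappaRec Mx Mm α = Mx α - ∑ β ∈ (Icc 0 α).erase α,
      kappaRec Mx Mm β * ((∏ e, (α e).choose (β e) : ℕ) : ℝ) * Mm (α - β) := by
  rw [kappaRec, sum_attach ((Icc 0 α).erase α)
    fun β => kappaRec Mx Mm β * ((∏ e, (α e).choose (β e) : ℕ) : ℝ) * Mm (α - β)]

theorem one_add_sum_erase_prod_choose_mul_pow_le (α : E → ℕ) :
    1 + ∑ β ∈ (Icc 0 α).erase α,
        ((∏ e, (α e).choose (β e) : ℕ) : ℝ) * ((∑ e, α e : ℕ) : ℝ) ^ (∑ e, β e) ≤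
      ((∑ e, α e : ℕ) + 1 : ℝ) ^ (∑ e, α e) := by
  rw [← sum_Icc_prod_choose_mul_pow, ← add_sum_erase _ _ (mem_Icc.2 ⟨zero_le, le_rfl⟩)]
  gcongr
  simp only [Nat.choose_self, prod_const_one, Nat.cast_one, one_mul]
  exact_mod_cast Nat.pow_self_pos

theorem abs_kappaRec_le {Mx Mm A B : (E → ℕ) → ℝ} (hMx : ∀ γ, |Mx γ| ≤ A γ)
    (hMm : ∀ γ, |Mm γ| ≤ B γ) (hAB : ∀ β γ, β ≤ γ → A β * B (γ - β) ≤ A γ) (α : E → ℕ) :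
    |kappaRec Mx Mm α| ≤ A α * ((∑ e, α e : ℕ) + 1 : ℝ) ^ (∑ e, α e) := by
  induction hm : ∑ e, α e using Nat.strong_induction_on generalizing α with
  | _ m ih =>
  have hA (γ) : 0 ≤ A γ := (abs_nonneg _).trans (hMx γ)
  have hterm : ∀ β ∈ (Icc 0 α).erase α,
      |kappaRec Mx Mm β * ((∏ e, (α e).choose (β e) : ℕ) : ℝ) * Mm (α - β)| ≤
        A α * (((∏ e, (α e).choose (β e) : ℕ) : ℝ) * (m : ℝ) ^ (∑ e, β e)) := by
    intro β hβ
    have hβα : β < α := by simpa using hβ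
    have hlt : ∑ e, β e < m := hm ▸ Fintype.sum_strictMono hβα
    have hpow : ((∑ e, β e : ℕ) + 1 : ℝ) ^ (∑ e, β e) ≤ (m : ℝ) ^ (∑ e, β e) := by
      gcongr
      exact_mod_cast hlt
    calc |kappaRec Mx Mm β * ((∏ e, (α e).choose (β e) : ℕ) : ℝ) * Mm (α - β)|
        = |kappaRec Mx Mm β| * ((∏ e, (α e).choose (β e) : ℕ) : ℝ) * |Mm (α - β)| := by
          rw [abs_mul, abs_mul, Nat.abs_cast]
      _ ≤ A β * (m : ℝ) ^ (∑ e, β e) * ((∏ e, (α e).choose (β e) : ℕ) : ℝ) * B (α - β) := by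
          have hκ := (ih _ hlt β rfl).trans (mul_le_mul_of_nonneg_left hpow (hA β))
          exact mul_le_mul (mul_le_mul_of_nonneg_right hκ (Nat.cast_nonneg _)) (hMm _)
            (abs_nonneg _) (by have := hA β; positivity)
      _ = (A β * B (α - β)) * (((∏ e, (α e).choose (β e) : ℕ) : ℝ) * (m : ℝ) ^ (∑ e, β e)) := by
          ring
      _ ≤ A α * (((∏ e, (α e).choose (β e) : ℕ) : ℝ) * (m : ℝ) ^ (∑ e, β e)) := by
          gcongr
          exact hAB β α hβα.le
  calc |kappaRec Mx Mm α|
      ≤ |Mx α| + ∑ β ∈ (Icc 0 α).erase α,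
          |kappaRec Mx Mm β * ((∏ e, (α e).choose (β e) : ℕ) : ℝ) * Mm (α - β)| := by
        rw [kappaRec_eq]
        refine (abs_sub _ _).trans ?_
        gcongr
        exact abs_sum_le_sum_abs _ _
    _ ≤ A α * (1 + ∑ β ∈ (Icc 0 α).erase α,
          ((∏ e, (α e).choose (β e) : ℕ) : ℝ) * (m : ℝ) ^ (∑ e, β e)) := by
        rw [mul_add, mul_one, mul_sum]
        exact add_le_add (hMx α) (sum_le_sum hterm)
    _ ≤ A α * ((m : ℝ) + 1) ^ m := by
        gcongr
        · exact hA α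
        simpa only [hm] using one_add_sum_erase_prod_choose_mul_pow_le α

end KappaRec

section SBM

variable {n k : ℕ}

theorem Xpow_add (lam : ℝ) (z : Fin n → Fin k) (γ γ' : OffDiag n → ℕ) :
    Xpow lam z (γ + γ') = Xpow lam z γ * Xpow lam z γ' := by
  simp only [Xpow, Pi.add_apply, pow_add, prod_mul_distrib]

theorem Xpow_single (lam : ℝ) (z : Fin n → Fin k) (e : OffDiag n) :
    Xpow lam z (Pi.single e 1) = Xent lam z e.1 := by
  rw [Xpow, Fintype.prod_eq_single e fun e' he' => by rw [Pi.single_eq_of_ne he', pow_zero],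
    Pi.single_eq_same, pow_one]

open Classical in
theorem Xpow_eq_ite (lam : ℝ) (z : Fin n → Fin k) (γ : OffDiag n → ℕ) :
    Xpow lam z γ =
      if ∀ a b, (edgeGraphE γ).Adj a b → z a = z b then lam ^ (∑ e, γ e) else 0 := by
  split_ifs with hz
  · rw [Xpow, ← prod_pow_eq_pow_sum]
    refine prod_congr rfl fun ⟨e, he⟩ _ => ?_
    induction e using Sym2.ind with
    | _ i j =>
    rcases eq_or_ne (γ ⟨s(i, j), he⟩) 0 with h0 | h0
    · rw [h0, pow_zero, pow_zero]
    · simp only [Xent, Sym2.lift_mk, if_pos (hz i j (edgeGraphE_adj.2 ⟨he, h0⟩))]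
  · push Not at hz
    obtain ⟨a, b, hab, hzab⟩ := hz
    obtain ⟨hd, hγ⟩ := edgeGraphE_adj.1 hab
    exact prod_eq_zero (mem_univ ⟨s(a, b), hd⟩) (by simp [Xent, hzab, hγ])

theorem sbmE_Xpow (hn : 0 < n) (hk : 0 < k) (lam : ℝ) (γ : OffDiag n → ℕ) :
    sbmE n k hn hk (fun z => Xpow lam z γ) =
      lam ^ (∑ e, γ e) * (1 / (k : ℝ)) ^ (edgeGraphE γ).rank := by
  classical
  rw [SimpleGraph.rank, Fintype.card_fin]
  set c := Nat.card (edgeGraphE γ).ConnectedComponent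
  have hnum : ∑ z : Fin n → Fin k with z ⟨0, hn⟩ = ⟨0, hk⟩, Xpow lam z γ =
      (k : ℝ) ^ (c - 1) * lam ^ (∑ e, γ e) := by
    have := (edgeGraphE γ).card_edgeConst_eval_eq (⟨0, hn⟩ : Fin n) (⟨0, hk⟩ : Fin k)
    rw [Nat.card_eq_fintype_card, Fintype.card_subtype, Fintype.card_fin] at this
    simp_rw [Xpow_eq_ite]
    rw [← sum_filter, filter_filter, sum_const, nsmul_eq_mul, this, Nat.cast_pow]
  have hden : #{z : Fin n → Fin k | z ⟨0, hn⟩ = ⟨0, hk⟩} = k ^ (n - 1) := by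
    have := Fintype.card_filter_piFinset_const_eq_of_mem univ (⟨0, hn⟩ : Fin n)
      (mem_univ (⟨0, hk⟩ : Fin k))
    rwa [Fintype.piFinset_univ, card_univ, Fintype.card_fin, Fintype.card_fin] at this
  have hc : 1 ≤ c :=
    Nat.card_pos_iff.2 ⟨⟨(edgeGraphE γ).connectedComponentMk ⟨0, hn⟩⟩, inferInstance⟩
  have hcn : c ≤ n := Fintype.card_fin n ▸ (edgeGraphE γ).card_connectedComponent_le_card
  have hsplit : (k : ℝ) ^ (n - 1) = (k : ℝ) ^ (c - 1) * (k : ℝ) ^ (n - c) := by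
    rw [← pow_add]
    congr 1
    omega
  have hk0 : (k : ℝ) ≠ 0 := by positivity
  rw [sbmE, hnum, hden, Nat.cast_pow, hsplit, one_div_pow]
  field_simp

def edge12 (hn : 2 ≤ n) : OffDiag n :=
  ⟨s(⟨0, by omega⟩, ⟨1, hn⟩), by simp⟩

theorem sbmE_Xent_mul_Xpow (hn : 2 ≤ n) (hk : 0 < k) (lam : ℝ) (γ : OffDiag n → ℕ) :
    sbmE n k (by omega) hk (fun z => Xent lam z s(⟨0, by omega⟩, ⟨1, hn⟩) * Xpow lam z γ) =
      lam ^ (∑ e, γ e + 1) * (1 / (k : ℝ)) ^ (edgeGraphE (γ + Pi.single (edge12 hn) 1)).rank := by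
  have hX : (fun z => Xent lam z s(⟨0, by omega⟩, ⟨1, hn⟩) * Xpow lam z γ) =
      fun z : Fin n → Fin k => Xpow lam z (γ + Pi.single (edge12 hn) 1) := by
    funext z
    rw [Xpow_add, Xpow_single, mul_comm]
    rfl
  simp only [hX, sbmE_Xpow, Pi.add_apply, sum_add_distrib, Fintype.sum_pi_single']

theorem abs_kappaSBM_le_rank (hn : 2 ≤ n) (hk : 0 < k) {lam : ℝ} (hlam : 0 ≤ lam)
    (α : OffDiag n → ℕ) :
    |kappaSBM n k hn hk lam α| ≤
      lam ^ (∑ e, α e + 1) * (1 / (k : ℝ)) ^ (edgeGraphE (α + Pi.single (edge12 hn) 1)).rank *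
        ((∑ e, α e : ℕ) + 1 : ℝ) ^ (∑ e, α e) := by
  set δ : OffDiag n → ℕ := Pi.single (edge12 hn) 1
  have hq : 1 / (k : ℝ) ≤ 1 := div_le_one_of_le₀ (Nat.one_le_cast.2 hk) k.cast_nonneg
  refine abs_kappaRec_le
    (A := fun γ => lam ^ (∑ e, γ e + 1) * (1 / (k : ℝ)) ^ (edgeGraphE (γ + δ)).rank)
    (B := fun γ => lam ^ (∑ e, γ e) * (1 / (k : ℝ)) ^ (edgeGraphE γ).rank)
    (fun γ => ?_) (fun γ => ?_) (fun β γ hβγ => ?_) α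
  · rw [sbmE_Xent_mul_Xpow, abs_of_nonneg (by positivity)]
  · rw [sbmE_Xpow, abs_of_nonneg (by positivity)]
  · have hsum : ∑ e, β e + ∑ e, (γ - β) e = ∑ e, γ e := by
      rw [← sum_add_distrib]
      exact sum_congr rfl fun e _ => Nat.add_sub_of_le (hβγ e)
    calc lam ^ (∑ e, β e + 1) * (1 / (k : ℝ)) ^ (edgeGraphE (β + δ)).rank *
          (lam ^ (∑ e, (γ - β) e) * (1 / (k : ℝ)) ^ (edgeGraphE (γ - β)).rank)
        = lam ^ (∑ e, γ e + 1) *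
            (1 / (k : ℝ)) ^ ((edgeGraphE (β + δ)).rank + (edgeGraphE (γ - β)).rank) := by
          rw [← hsum, pow_add, pow_add, pow_add]
          ring
      _ ≤ lam ^ (∑ e, γ e + 1) * (1 / (k : ℝ)) ^ (edgeGraphE (γ + δ)).rank := by
          have := pow_le_pow_of_le_one (by positivity) hq (rank_edgeGraphE_add_le hβγ δ)
          gcongr

end SBM

/-- Under the uniform SBM prior with fixed first vertex, for a
connected multigraph `α` with `|α| ≥ 1` and both vertices 1 and 2 spanned,
`|κ_α(x, X)| ≤ λ^{|α|+1} (1/k)^{|V(α)|−1} (|α|+1)^{|α|}`. -/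
theorem kappaSBM_abs_le (n k : ℕ) (hn : 2 ≤ n)
    (hk : 0 < k) (lam : ℝ) (hlam : 0 < lam) (α : OffDiag n → ℕ)
    (hconn : MGConnectedE α) :
    |kappaSBM n k hn hk lam α| ≤
      lam ^ (∑ e, α e + 1) * (1 / (k : ℝ)) ^ ((vertexSetE α).ncard - 1) *
        ((∑ e, α e : ℕ) + 1 : ℝ) ^ (∑ e, α e) := by
  have hrank : (vertexSetE α).ncard - 1 ≤ (edgeGraphE (α + Pi.single (edge12 hn) 1)).rank :=
    (SimpleGraph.ncard_sub_one_le_rank hconn.2).trans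
      (SimpleGraph.rank_mono (edgeGraphE_add α _ ▸ le_sup_left))
  refine (abs_kappaSBM_le_rank hn hk hlam.le α).trans ?_
  gcongr _ * ?_ * _
  exact pow_le_pow_of_le_one (by positivity)
    (div_le_one_of_le₀ (Nat.one_le_cast.2 hk) k.cast_nonneg) hrank
end

section
/- Let Y = M + E ∈ ℝ^{n₁×n₂} where rank(M) ≤ k, and let M̂ be a best rank-k approximation of Y in Frobenius norm. Then ‖M̂ − M‖_F² ≤ 8k‖Y − M‖², where ‖·‖ denotes the spectral (operator) norm. -/
/-- Squared Frobenius norm of a matrix. -/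
noncomputable def frobSq {n₁ n₂ : ℕ} (A : Matrix (Fin n₁) (Fin n₂) ℝ) : ℝ :=
  ∑ i, ∑ j, (A i j) ^ 2

/-- Spectral (operator) norm of a matrix. -/
noncomputable def specNorm {n₁ n₂ : ℕ} (A : Matrix (Fin n₁) (Fin n₂) ℝ) : ℝ :=
  ‖LinearMap.toContinuousLinearMap (Matrix.toEuclideanLin A)‖

/-!
Write `D = M̂ - M` and `E = Y - M`. Comparing `M̂` with the competitor `M` gives
`‖E - D‖_F² ≤ ‖E‖_F²`, i.e. `‖D‖_F² ≤ 2⟨D, E⟩_F`. The rows of `D` span a space of dimension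
`rank D ≤ 2k`; expanding them in an orthonormal basis `(w_l)` of that space and applying
Cauchy–Schwarz gives `⟨D, E⟩_F² ≤ ‖D‖_F² · ∑_l ‖E w_l‖² ≤ ‖D‖_F² · rank D · ‖E‖²`.
Hence `‖D‖_F² ≤ 4 rank D ‖E‖² ≤ 8k ‖E‖²`.
-/

open Finset Matrix Module Submodule
open scoped RealInnerProductSpace InnerProductSpace

theorem OrthonormalBasis.sum_inner_mul_inner_of_mem {𝕜 E ι : Type*} [RCLike 𝕜]
    [NormedAddCommGroup E] [InnerProductSpace 𝕜 E] [Fintype ι] {V : Submodule 𝕜 E}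
    (b : OrthonormalBasis ι 𝕜 V) {x : E} (hx : x ∈ V) (y : E) :
    ∑ l, ⟪x, (b l : E)⟫_𝕜 * ⟪(b l : E), y⟫_𝕜 = ⟪x, y⟫_𝕜 := by
  conv_rhs => rw [← show ((⟨x, hx⟩ : V) : E) = x from rfl, ← b.sum_repr' ⟨x, hx⟩]
  rw [Submodule.coe_sum, sum_inner]
  refine sum_congr rfl fun l _ => ?_
  rw [Submodule.coe_smul, inner_smul_left, inner_conj_symm, coe_inner]

theorem OrthonormalBasis.sq_sum_inner_le_of_mem {E ι κ : Type*} [NormedAddCommGroup E]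
    [InnerProductSpace ℝ E] [Fintype ι] [Fintype κ] {V : Submodule ℝ E}
    (b : OrthonormalBasis ι ℝ V) {d : κ → E} (hd : ∀ i, d i ∈ V) (e : κ → E) :
    (∑ i, ⟪d i, e i⟫) ^ 2 ≤ (∑ i, ‖d i‖ ^ 2) * ∑ l, ∑ i, ⟪(b l : E), e i⟫ ^ 2 := by
  have hnorm : ∀ i, ‖d i‖ ^ 2 = ∑ l, ⟪d i, (b l : E)⟫ ^ 2 := fun i => by
    rw [← real_inner_self_eq_norm_sq, ← b.sum_inner_mul_inner_of_mem (hd i)]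
    exact sum_congr rfl fun l _ => by rw [real_inner_comm (b l : E), sq]
  have hinner : ∀ i, ⟪d i, e i⟫ = ∑ l, ⟪d i, (b l : E)⟫ * ⟪(b l : E), e i⟫ := fun i =>
    (b.sum_inner_mul_inner_of_mem (hd i) (e i)).symm
  simp only [hinner, hnorm]
  rw [Finset.sum_comm (γ := ι)]
  simp_rw [← Fintype.sum_prod_type']
  exact Finset.sum_mul_sq_le_sq_mul_sq _ _ _

namespace Matrix

theorem rank_sub_le {m n R : Type*} [Fintype m] [Fintype n] [Field R] (A B : Matrix m n R) :
    (A - B).rank ≤ A.rank + B.rank := by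
  have h : LinearMap.range (A - B).mulVecLin ≤
      LinearMap.range A.mulVecLin ⊔ LinearMap.range B.mulVecLin := by
    rintro _ ⟨x, rfl⟩
    rw [mulVecLin_apply, sub_mulVec]
    exact sub_mem_sup ⟨x, rfl⟩ ⟨x, rfl⟩
  exact (finrank_mono h).trans (finrank_add_le_finrank_add_finrank _ _)

theorem finrank_span_toLp_row {m n : Type*} [Fintype m] [Fintype n] (A : Matrix m n ℝ) :
    finrank ℝ (span ℝ (Set.range fun i => WithLp.toLp 2 (A i))) = A.rank := by
  have h : (Set.range fun i => WithLp.toLp 2 (A i)) =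
      ((WithLp.linearEquiv 2 ℝ (n → ℝ)).symm : (n → ℝ) →ₗ[ℝ] _) '' Set.range A.row := by
    rw [← Set.range_comp]; rfl
  rw [h, span_image, LinearEquiv.finrank_map_eq, rank_eq_finrank_span_row]

theorem toEuclideanLin_apply_eq_inner {m n : Type*} [Fintype n] [DecidableEq n]
    (A : Matrix m n ℝ) (w : EuclideanSpace ℝ n) (i : m) :
    toEuclideanLin A w i = ⟪w, WithLp.toLp 2 (A i)⟫ := by
  simp [toLpLin_apply, mulVec, dotProduct, PiLp.inner_apply]

end Matrix

noncomputable def frobInner {n₁ n₂ : ℕ} (A B : Matrix (Fin n₁) (Fin n₂) ℝ) : ℝ :=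
  ∑ i, ∑ j, A i j * B i j

section Frobenius

variable {n₁ n₂ : ℕ}

theorem frobSq_nonneg (A : Matrix (Fin n₁) (Fin n₂) ℝ) : 0 ≤ frobSq A := by
  unfold frobSq; positivity

theorem frobSq_eq_sum_norm_sq_row (A : Matrix (Fin n₁) (Fin n₂) ℝ) :
    frobSq A = ∑ i, ‖WithLp.toLp 2 (A i)‖ ^ 2 := by
  simp [frobSq, EuclideanSpace.norm_sq_eq]

theorem frobInner_eq_sum_inner_row (A B : Matrix (Fin n₁) (Fin n₂) ℝ) :
    frobInner A B = ∑ i, ⟪WithLp.toLp 2 (A i), WithLp.toLp 2 (B i)⟫ := by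
  simp [frobInner, PiLp.inner_apply, mul_comm]

theorem frobSq_le_two_mul_frobInner_of_frobSq_sub_le {D E : Matrix (Fin n₁) (Fin n₂) ℝ}
    (h : frobSq (E - D) ≤ frobSq E) : frobSq D ≤ 2 * frobInner D E := by
  have hsub : frobSq (E - D) = frobSq E - 2 * frobInner D E + frobSq D := by
    simp only [frobSq, frobInner, Matrix.sub_apply, sub_sq, sum_add_distrib, sum_sub_distrib,
      mul_sum]
    simp only [mul_assoc, mul_comm (E _ _)]
  linarith

theorem norm_toEuclideanLin_le_specNorm (A : Matrix (Fin n₁) (Fin n₂) ℝ)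
    (w : EuclideanSpace ℝ (Fin n₂)) : ‖toEuclideanLin A w‖ ≤ specNorm A * ‖w‖ :=
  (LinearMap.toContinuousLinearMap (toEuclideanLin A)).le_opNorm w

theorem frobInner_sq_le (D E : Matrix (Fin n₁) (Fin n₂) ℝ) :
    frobInner D E ^ 2 ≤ frobSq D * (D.rank * specNorm E ^ 2) := by
  let b := stdOrthonormalBasis ℝ (span ℝ (Set.range fun i => WithLp.toLp 2 (D i)))
  have hE : ∀ l, ∑ i, ⟪(b l : EuclideanSpace ℝ (Fin n₂)), WithLp.toLp 2 (E i)⟫ ^ 2 ≤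
      specNorm E ^ 2 := fun l => by
    have hw : ‖(b l : EuclideanSpace ℝ (Fin n₂))‖ = 1 := b.orthonormal.1 l
    simpa [EuclideanSpace.norm_sq_eq, toEuclideanLin_apply_eq_inner, hw] using
      pow_le_pow_left₀ (norm_nonneg _) (norm_toEuclideanLin_le_specNorm E (b l)) 2
  rw [frobInner_eq_sum_inner_row, frobSq_eq_sum_norm_sq_row]
  calc _ ≤ _ := b.sq_sum_inner_le_of_mem (fun i => subset_span ⟨i, rfl⟩) _
    _ ≤ (∑ i, ‖WithLp.toLp 2 (D i)‖ ^ 2) * ∑ _l, specNorm E ^ 2 := by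
        gcongr with l; exact hE l
    _ = _ := by simp [finrank_span_toLp_row]

end Frobenius

/-- If `rank M ≤ k` and `M̂` is a best rank-`k` approximation of
`Y` in Frobenius norm, then `‖M̂ − M‖_F² ≤ 8k‖Y − M‖²` (spectral norm). -/
theorem best_rank_k_approx_error {n₁ n₂ k : ℕ}
    (Y M Mhat : Matrix (Fin n₁) (Fin n₂) ℝ)
    (hM : M.rank ≤ k) (hMhat : Mhat.rank ≤ k)
    (hbest : ∀ B : Matrix (Fin n₁) (Fin n₂) ℝ, B.rank ≤ k →
      frobSq (Y - Mhat) ≤ frobSq (Y - B)) :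
    frobSq (Mhat - M) ≤ 8 * (k : ℝ) * specNorm (Y - M) ^ 2 := by
  have hopt : frobSq (Mhat - M) ≤ 2 * frobInner (Mhat - M) (Y - M) :=
    frobSq_le_two_mul_frobInner_of_frobSq_sub_le
      (by simpa [sub_sub_sub_cancel_left] using hbest M hM)
  have hrank : ((Mhat - M).rank : ℝ) ≤ 2 * k := by
    exact_mod_cast (rank_sub_le Mhat M).trans (by omega)
  have hcs := frobInner_sq_le (Mhat - M) (Y - M)
  rcases (frobSq_nonneg (Mhat - M)).eq_or_lt with hzero | hpos
  · rw [← hzero]; positivity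
  refine le_of_mul_le_mul_left ?_ hpos
  calc frobSq (Mhat - M) * frobSq (Mhat - M) ≤ 4 * frobInner (Mhat - M) (Y - M) ^ 2 := by
        nlinarith
    _ ≤ 4 * (frobSq (Mhat - M) * ((Mhat - M).rank * specNorm (Y - M) ^ 2)) := by gcongr
    _ ≤ frobSq (Mhat - M) * (8 * k * specNorm (Y - M) ^ 2) := by
        nlinarith [mul_le_mul_of_nonneg_right hrank (sq_nonneg (specNorm (Y - M)))]
end
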